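/- Consider the three-class counter-example with one-dimensional perturbation δ ∈ [-ε, ε] (ε > 0) and logits r_y(δ) = 3δ, r_z(δ) = 2δ, r₃(δ) = -10δ, and softmax probabilities p_w(δ) = exp(r_w(δ)) / (exp(3δ)+exp(2δ)+exp(-10δ)). Then the cross-entropy loss ℓ(δ) = -log(p_y(δ)) is uniquely maximized over [-ε, ε] at δ = -ε. -/
import Mathlib


noncomputable def ceLoss (δ : ℝ) : ℝ :=
  -Real.log (Real.exp (3 * δ) /
    (Real.exp (3 * δ) + Real.exp (2 * δ) + Real.exp (-10 * δ)))

lemma ceLoss_eq (δ : ℝ) :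
    ceLoss δ = Real.log (1 + Real.exp (-δ) + Real.exp (-13 * δ)) := by
  have hS : 0 < Real.exp (3 * δ) + Real.exp (2 * δ) + Real.exp (-10 * δ) := by
    positivity
  unfold ceLoss
  rw [Real.log_div (Real.exp_pos _).ne' hS.ne', Real.log_exp, neg_sub]
  have : 1 + Real.exp (-δ) + Real.exp (-13 * δ) =
      (Real.exp (3 * δ) + Real.exp (2 * δ) + Real.exp (-10 * δ)) * Real.exp (-(3 * δ)) := by
    rw [add_mul, add_mul, ← Real.exp_add, ← Real.exp_add, ← Real.exp_add]
    ring_nf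
    rw [Real.exp_zero]
    ring
  rw [this, Real.log_mul hS.ne' (Real.exp_pos _).ne', Real.log_exp]
  ring

lemma ceLoss_strictAnti : StrictAnti ceLoss := by
  intro a b hab
  rw [ceLoss_eq, ceLoss_eq]
  apply Real.log_lt_log (by positivity)
  have h1 : Real.exp (-b) < Real.exp (-a) := Real.exp_lt_exp.2 (by linarith)
  have h2 : Real.exp (-13 * b) < Real.exp (-13 * a) := Real.exp_lt_exp.2 (by linarith)
  linarith

theorem ceLoss_unique_max (ε : ℝ) (hε : 0 < ε) :
    IsMaxOn ceLoss (Set.Icc (-ε) ε) (-ε) ∧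
      ∀ δ ∈ Set.Icc (-ε) ε, δ ≠ -ε → ceLoss δ < ceLoss (-ε) := by
  constructor
  · intro δ hδ
    exact ceLoss_strictAnti.antitone hδ.1
  · intro δ hδ hne
    exact ceLoss_strictAnti (lt_of_le_of_ne hδ.1 (Ne.symm hne))
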